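/- arXiv:math/0412397 — 4 statements merged into one kernel-verified Lean document; each statement's English description precedes it below -/
import Mathlib

section
/- Let C be a conformal algebra over a field k of characteristic 0 satisfying conformal associativity: (a ∘ₙ b) ∘ₘ c = ∑_{t≥0} (−1)^t C(n,t) a ∘_{n−t} (b ∘_{m+t} c) for all a,b,c ∈ C and n,m ≥ 0. Then the coefficient algebra Coeff C with multiplication a(n)b(m) = ∑_{s≥0} C(n,s)(a ∘ₛ b)(n+m−s) is associative: (a(n)b(m))c(l) = a(n)(b(m)c(l)) for all a,b,c ∈ C and n,m,l ∈ ℤ. -/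
/-- A conformal algebra over a field `k` of characteristic `0`: a `k[D]`-module
(encoded by the `k`-linear endomorphism `D`) with `k`-bilinear `n`-products
satisfying locality and sesquilinearity (with the convention `a ∘_{-1} b = 0`). -/
structure ConformalAlgebra (k C : Type*) [Field k] [CharZero k]
    [AddCommGroup C] [Module k C] where
  D : C →ₗ[k] C
  prod : ℕ → C →ₗ[k] C →ₗ[k] C
  locality : ∀ a b : C, ∃ N : ℕ, ∀ n, N ≤ n → prod n a b = 0
  sesq_left_zero : ∀ a b : C, prod 0 (D a) b = 0
  sesq_left : ∀ (n : ℕ) (a b : C),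
    prod (n + 1) (D a) b = -(((n : ℕ) + 1 : k)) • prod n a b
  sesq_right_zero : ∀ a b : C, prod 0 a (D b) = D (prod 0 a b)
  sesq_right : ∀ (n : ℕ) (a b : C),
    prod (n + 1) a (D b) = D (prod (n + 1) a b) + (((n : ℕ) + 1 : k)) • prod n a b


/-- The generalized (falling-factorial) binomial coefficient
`C(n,k) = n(n-1)⋯(n-k+1)/k!` for `n : ℤ`, `k : ℕ`, valued in `ℚ`. -/
def genChoose (n : ℤ) (k : ℕ) : ℚ :=
  (∏ i ∈ Finset.range k, ((n : ℚ) - i)) / (k.factorial : ℚ)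

/-! Expanding `(a ∘ₛ b) ∘ᵤ c` by conformal associativity and substituting `p = s - t`,
`q = u + t` turns the left-hand side into a combination of the `a ∘ₚ (b ∘_q c)`, whose
coefficient is an alternating sum of products of binomial coefficients. After
`C(n, p + t) C(p + t, t) = C(n, p) C(n - p, t)` and upper negation, that sum collapses by
Chu–Vandermonde to `C(n, p) C(m, q)`. -/

open Finset

namespace Ring

variable {R : Type*} [CommRing R] [BinomialRing R]

theorem choose_eq_neg_one_pow_mul_choose (r : R) (n : ℕ) :
    choose r n = (-1) ^ n * choose (n - r - 1) n := by
  have h := choose_neg (r - n + 1) n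
  rw [show -(r - n + 1) = n - r - 1 by ring, show r - n + 1 + n - 1 = r by ring] at h
  rw [h, Units.smul_def, zsmul_eq_mul, Int.cast_negOnePow_natCast, ← mul_assoc, ← mul_pow]
  simp

theorem sum_range_choose_mul_choose (r s : R) (q : ℕ) :
    ∑ t ∈ range (q + 1), choose r t * choose s (q - t) = choose (r + s) q := by
  rw [add_choose_eq q (Commute.all r s), Nat.sum_antidiagonal_eq_sum_range_succ_mk]

theorem sum_range_neg_one_pow_mul_choose_mul_choose_sub (x y : R) (q : ℕ) :
    ∑ t ∈ range (q + 1), (-1) ^ t * choose x t * choose (y - t) (q - t) = choose (y - x) q := by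
  have negate (t : ℕ) (ht : t ∈ range (q + 1)) : (-1) ^ t * choose x t * choose (y - t) (q - t)
      = (-1) ^ q * (choose x t * choose (q - y - 1) (q - t)) := by
    have htq : t ≤ q := Nat.lt_succ_iff.mp (mem_range.mp ht)
    rw [choose_eq_neg_one_pow_mul_choose (y - t), Nat.cast_sub htq,
      show (q : R) - t - (y - t) - 1 = q - y - 1 by ring, ← Nat.add_sub_cancel' htq, pow_add,
      Nat.add_sub_cancel_left]
    ring
  rw [sum_congr rfl negate, ← mul_sum, sum_range_choose_mul_choose,
    choose_eq_neg_one_pow_mul_choose (y - x)]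
  congr 2
  ring

theorem sum_range_neg_one_pow_mul_choose_add_mul_choose_mul_choose (r s : R) (p q : ℕ) :
    ∑ t ∈ range (q + 1), (-1) ^ t * (Nat.choose (p + t) t : R) *
      (choose r (p + t) * choose (r + s - (p + t)) (q - t)) = choose r p * choose s q := by
  have trinomial (t : ℕ) :
      (Nat.choose (p + t) t : R) * choose r (p + t) = choose r p * choose (r - p) t := by
    rw [← Nat.choose_symm_add, ← nsmul_eq_mul, choose_smul_choose r (Nat.le_add_right p t),
      Nat.add_sub_cancel_left]
  calc _ = choose r p * ∑ t ∈ range (q + 1),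
        (-1) ^ t * choose (r - p) t * choose (r + s - p - t) (q - t) := by
        rw [mul_sum]
        refine sum_congr rfl fun t _ => ?_
        rw [mul_assoc, ← mul_assoc _ (choose r _), trinomial, sub_add_eq_sub_sub]
        ring
    _ = choose r p * choose s q := by
        rw [sum_range_neg_one_pow_mul_choose_mul_choose_sub]
        congr 2
        ring

end Ring

theorem genChoose_eq_choose (n : ℤ) (k : ℕ) : genChoose n k = Ring.choose (n : ℚ) k := by
  rw [Ring.choose_eq_smul, genChoose, ← descPochhammer_eval_eq_prod_range,
    ← Polynomial.aeval_eq_smeval, Polynomial.aeval_def, Polynomial.eval₂_eq_eval_map,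
    descPochhammer_map, smul_eq_mul, div_eq_inv_mul]

theorem sum_range_neg_one_pow_mul_choose_add_mul_genChoose_mul_genChoose (n m : ℤ) (p q : ℕ) :
    ∑ t ∈ range (q + 1), (-1) ^ t * (Nat.choose (p + t) t : ℚ) *
      (genChoose n ↑(p + t) * genChoose (n + m - ↑(p + t)) (q - t))
      = genChoose n p * genChoose m q := by
  push_cast [genChoose_eq_choose]
  exact Ring.sum_range_neg_one_pow_mul_choose_add_mul_choose_mul_choose _ _ p q

theorem sum_range_sum_range_sum_range_shear {M : Type*} [AddCommMonoid M]
    (f : ℕ → ℕ → ℕ → M) {P Q A B : ℕ} (hA : P + Q ≤ A) (hB : Q ≤ B)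
    (hf : ∀ p q t, f p q t ≠ 0 → p < P ∧ q < Q) :
    ∑ p ∈ range P, ∑ q ∈ range Q, ∑ t ∈ range (q + 1), f p q t
      = ∑ s ∈ range A, ∑ u ∈ range B, ∑ t ∈ range (s + 1), f (s - t) (u + t) t := by
  rw [← sum_product' (f := fun p q => ∑ t ∈ range (q + 1), f p q t), sum_sigma',
    ← sum_product' (f := fun s u => ∑ t ∈ range (s + 1), f (s - t) (u + t) t), sum_sigma']
  refine sum_bij_ne_zero (fun x _ _ => ⟨(x.1.1 + x.2, x.1.2 - x.2), x.2⟩) ?_ ?_ ?_ ?_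
  · rintro ⟨⟨p, q⟩, t⟩ h -
    simp only [mem_sigma, mem_product, mem_range] at h ⊢
    omega
  · rintro ⟨⟨p, q⟩, t⟩ h - ⟨⟨p', q'⟩, t'⟩ h' - heq
    simp only [mem_sigma, mem_product, mem_range] at h h'
    simp only [Sigma.mk.injEq, Prod.mk.injEq, heq_eq_eq] at heq ⊢
    omega
  · rintro ⟨⟨s, u⟩, t⟩ h hne
    simp only [mem_sigma, mem_product, mem_range] at h
    obtain ⟨hp, hq⟩ := hf (s - t) (u + t) t hne
    refine ⟨⟨(s - t, u + t), t⟩, ?_, hne, ?_⟩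
    · simp only [mem_sigma, mem_product, mem_range]
      omega
    · simp only [Sigma.mk.injEq, Prod.mk.injEq, heq_eq_eq, and_true]
      omega
  · rintro ⟨⟨p, q⟩, t⟩ h -
    simp only [mem_sigma, mem_product, mem_range] at h
    simp only [Nat.add_sub_cancel, Nat.sub_add_cancel (by omega : t ≤ q)]

theorem coeff_algebra_associative_general {k C : Type*} [Field k] [CharZero k]
    [AddCommGroup C] [Module k C] (CA : ConformalAlgebra k C)
    (hass : ∀ (a b c : C) (n m : ℕ),
      CA.prod m (CA.prod n a b) c = ∑ t ∈ Finset.range (n + 1),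
        ((-1 : k) ^ t * (n.choose t : k)) • CA.prod (n - t) a (CA.prod (m + t) b c))
    {M : Type*} [AddCommGroup M] [Module k M] (φ : ℤ → C →ₗ[k] M)
    (a b c : C) (n m l : ℤ) (N : ℕ)
    (h1 : ∀ s, N ≤ s → CA.prod s a b = 0)
    (h2 : ∀ s, N ≤ s → CA.prod s b c = 0)
    (h4 : ∀ s u, N ≤ u → CA.prod u a (CA.prod s b c) = 0) :
    ∑ s ∈ Finset.range N, ∑ u ∈ Finset.range N,
        ((genChoose n s * genChoose (n + m - s) u : ℚ) : k) •
          φ (n + m + l - s - u) (CA.prod u (CA.prod s a b) c)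
      = ∑ u ∈ Finset.range N, ∑ s ∈ Finset.range N,
          ((genChoose m u * genChoose n s : ℚ) : k) •
            φ (n + m + l - s - u) (CA.prod s a (CA.prod u b c)) := by
  set T : ℕ → ℕ → M := fun p q => φ (n + m + l - p - q) (CA.prod p a (CA.prod q b c))
  set f : ℕ → ℕ → ℕ → M := fun p q t =>
    (((-1) ^ t * (Nat.choose (p + t) t : ℚ) *
      (genChoose n ↑(p + t) * genChoose (n + m - ↑(p + t)) (q - t)) : ℚ) : k) • T p q
  have supp_f (p q t : ℕ) (hne : f p q t ≠ 0) : p < N ∧ q < N := by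
    by_contra! hpq
    refine hne (smul_eq_zero_of_right _ ?_)
    by_cases hp : N ≤ p
    · simp only [T, h4 q p hp, map_zero]
    · simp only [T, h2 q (hpq (not_le.mp hp)), map_zero]
  have expand (s u : ℕ) : ((genChoose n s * genChoose (n + m - s) u : ℚ) : k) •
      φ (n + m + l - s - u) (CA.prod u (CA.prod s a b) c)
        = ∑ t ∈ range (s + 1), f (s - t) (u + t) t := by
    rw [hass, map_sum, smul_sum]
    refine sum_congr rfl fun t ht => ?_
    have hts : t ≤ s := Nat.lt_succ_iff.mp (mem_range.mp ht)
    simp only [f, T, Nat.sub_add_cancel hts, Nat.add_sub_cancel, map_smul, smul_smul]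
    congr 3 <;> push_cast [Nat.cast_sub hts] <;> ring
  have collect (p q : ℕ) : ∑ t ∈ range (q + 1), f p q t
      = ((genChoose n p * genChoose m q : ℚ) : k) • T p q := by
    rw [← sum_smul, ← Rat.cast_sum, sum_range_neg_one_pow_mul_choose_add_mul_genChoose_mul_genChoose]
  -- `s` runs up to `N + N` so that the substitution `s = p + t` reaches every `p, t < N`.
  calc _ = ∑ s ∈ range (N + N), ∑ u ∈ range N,
        ((genChoose n s * genChoose (n + m - s) u : ℚ) : k) •
          φ (n + m + l - s - u) (CA.prod u (CA.prod s a b) c) := by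
        refine sum_subset (range_subset_range.mpr (Nat.le_add_right N N)) fun s _ hs => ?_
        simp [h1 s (not_lt.mp (mem_range.not.mp hs))]
    _ = ∑ p ∈ range N, ∑ q ∈ range N, ∑ t ∈ range (q + 1), f p q t := by
        simp only [expand]
        exact (sum_range_sum_range_sum_range_shear f le_rfl le_rfl supp_f).symm
    _ = _ := by
        simp only [collect]
        rw [sum_comm]
        simp only [T, mul_comm]

/-- if `C` satisfies conformal associativity
`(a ∘ₙ b) ∘ₘ c = ∑_t (−1)^t C(n,t) a ∘_{n−t} (b ∘_{m+t} c)`, then the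
coefficient algebra is associative: `(a(n)b(m))c(l) = a(n)(b(m)c(l))`.
Elements of `Coeff C` are encoded by evaluating against an arbitrary family
`φ : ℤ → C →ₗ[k] M` linear in the `C`-argument. -/
theorem coeff_algebra_associative {k C : Type*} [Field k] [CharZero k]
    [AddCommGroup C] [Module k C] (CA : ConformalAlgebra k C)
    (hass : ∀ (a b c : C) (n m : ℕ),
      CA.prod m (CA.prod n a b) c = ∑ t ∈ Finset.range (n + 1),
        ((-1 : k) ^ t * (n.choose t : k)) • CA.prod (n - t) a (CA.prod (m + t) b c))
    {M : Type*} [AddCommGroup M] [Module k M] (φ : ℤ → C →ₗ[k] M)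
    (a b c : C) (n m l : ℤ) (N : ℕ)
    (h1 : ∀ s, N ≤ s → CA.prod s a b = 0)
    (h2 : ∀ s, N ≤ s → CA.prod s b c = 0)
    (h3 : ∀ s u, N ≤ u → CA.prod u (CA.prod s a b) c = 0)
    (h4 : ∀ s u, N ≤ u → CA.prod u a (CA.prod s b c) = 0) :
    ∑ s ∈ Finset.range N, ∑ u ∈ Finset.range N,
        ((genChoose n s * genChoose (n + m - s) u : ℚ) : k) •
          φ (n + m + l - s - u) (CA.prod u (CA.prod s a b) c)
      = ∑ u ∈ Finset.range N, ∑ s ∈ Finset.range N,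
          ((genChoose m u * genChoose n s : ℚ) : k) •
            φ (n + m + l - s - u) (CA.prod s a (CA.prod u b c)) :=
  coeff_algebra_associative_general CA hass φ a b c n m l N h1 h2 h4
end

section
/- Let H be a commutative and cocommutative Hopf algebra, A an associative H-comodule algebra, and P(A) = H ⊗ A the pseudoalgebra with pseudoproduct (h⊗a) ∗ (g⊗b) = h·b₍₁₎ ⊗ g·a₍₁₎ ⊗_H (1 ⊗ a₍₂₎b₍₂₎). Then P(A) is associative as a pseudoalgebra: (x ∗ y) ∗ z = x ∗ (y ∗ z) in H^{⊗3} ⊗_H P(A) for all x, y, z ∈ P(A), where the expanded pseudoproduct of F ⊗_H a ∈ H^{⊗n} ⊗_H P and G ⊗_H b ∈ H^{⊗m} ⊗_H P is defined by (F ⊗_H a) ∗ (G ⊗_H b) = (F ⊗ G ⊗_H 1)(Δ^{(n)} ⊗ Δ^{(m)} ⊗_H id)(a ∗ b). -/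
open TensorProduct

variable {k H A : Type*} [CommRing k] [CommRing H] [HopfAlgebra k H]
  [NonUnitalRing A] [Module k A] [SMulCommClass k A A] [IsScalarTower k A A]

/-- Swap of the two outer `H`-factors of `H ⊗ (H ⊗ M)`. -/
noncomputable def swapHH (k H : Type*) [CommRing k] [CommRing H] [Algebra k H]
    (M : Type*) [AddCommGroup M] [Module k M] :
    H ⊗[k] (H ⊗[k] M) →ₗ[k] H ⊗[k] (H ⊗[k] M) :=
  (TensorProduct.assoc k H H M).toLinearMap ∘ₗ
    (LinearMap.rTensor M (TensorProduct.comm k H H).toLinearMap) ∘ₗ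
    (TensorProduct.assoc k H H M).symm.toLinearMap

/-- The pseudoproduct on `P(A) = H ⊗ A` attached to a coaction `δ`, under the
identification `(H ⊗ H) ⊗_H (H ⊗ A) ≅ H ⊗ (H ⊗ A)`. -/
noncomputable def pseudoProd (δ : A →ₗ[k] H ⊗[k] A) (x y : H ⊗[k] A) :
    H ⊗[k] (H ⊗[k] A) :=
  (LinearMap.lTensor H δ x) * (swapHH k H A (LinearMap.lTensor H δ y))

/-- The iterated coaction `a ↦ a₍₁₎ ⊗ (a₍₂₎ ⊗ a₍₃₎)`. -/
noncomputable def coact2 (δ : A →ₗ[k] H ⊗[k] A) : A →ₗ[k] H ⊗[k] (H ⊗[k] A) :=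
  (LinearMap.lTensor H δ) ∘ₗ δ

/-- The expanded pseudoproduct `(H² ⊗_H P) ∗ P`, under the identifications
`H² ⊗_H (H ⊗ A) ≅ H ⊗ (H ⊗ A)` and `H³ ⊗_H (H ⊗ A) ≅ H ⊗ (H ⊗ (H ⊗ A))`. -/
noncomputable def expProdL (δ : A →ₗ[k] H ⊗[k] A)
    (X : H ⊗[k] (H ⊗[k] A)) (z : H ⊗[k] A) : H ⊗[k] (H ⊗[k] (H ⊗[k] A)) :=
  letI : NonUnitalNonAssocSemiring (H ⊗[k] (H ⊗[k] A)) := inferInstance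
  (LinearMap.lTensor H (LinearMap.lTensor H δ) X) *
    ((LinearMap.lTensor H (swapHH k H A) ∘ₗ swapHH k H (H ⊗[k] A) ∘ₗ
        LinearMap.lTensor H (coact2 δ)) z)

/-- The expanded pseudoproduct `P ∗ (H² ⊗_H P)`, under the same identifications. -/
noncomputable def expProdR (δ : A →ₗ[k] H ⊗[k] A)
    (x : H ⊗[k] A) (Y : H ⊗[k] (H ⊗[k] A)) : H ⊗[k] (H ⊗[k] (H ⊗[k] A)) :=
  letI : NonUnitalNonAssocSemiring (H ⊗[k] (H ⊗[k] A)) := inferInstance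
  (LinearMap.lTensor H (coact2 δ) x) *
    ((swapHH k H (H ⊗[k] A) ∘ₗ LinearMap.lTensor H (swapHH k H A) ∘ₗ
        LinearMap.lTensor H (LinearMap.lTensor H δ)) Y)

/-! Pushing the coaction through products (it is multiplicative) and through the leg swaps
(naturality), both sides become products in `H ⊗ H ⊗ H ⊗ A` of `x`, `y`, `z` coacted twice,
with their `H`-legs permuted. The two permutations differ by a braid relation and by swapping
the first two legs of `(id ⊗ δ) δ a`; that swap is trivial since, by coassociativity, this
element is `(Δ ⊗ id) δ a` and `Δ` is cocommutative. Associativity of `A` finishes. -/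

lemma LinearMap.lTensor_map_mul {k H M N : Type*} [CommSemiring k] [Semiring H] [Algebra k H]
    [NonUnitalNonAssocSemiring M] [Module k M] [SMulCommClass k M M] [IsScalarTower k M M]
    [NonUnitalNonAssocSemiring N] [Module k N] [SMulCommClass k N N] [IsScalarTower k N N]
    (f : M →ₗ[k] N) (hf : ∀ a b, f (a * b) = f a * f b) (u v : H ⊗[k] M) :
    f.lTensor H (u * v) = f.lTensor H u * f.lTensor H v := by
  have key : (LinearMap.mul k (H ⊗[k] M)).compr₂ (f.lTensor H) =
      (LinearMap.mul k (H ⊗[k] N)).compl₁₂ (f.lTensor H) (f.lTensor H) := by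
    ext; simp [hf]
  exact congr($key u v)

section SwapHH

variable {k H : Type*} [CommRing k] [CommRing H] [Algebra k H]

lemma swapHH_mul {M : Type*} [NonUnitalNonAssocRing M] [Module k M]
    [SMulCommClass k M M] [IsScalarTower k M M] (u v : H ⊗[k] (H ⊗[k] M)) :
    swapHH k H M (u * v) = swapHH k H M u * swapHH k H M v := by
  have key : (LinearMap.mul k (H ⊗[k] (H ⊗[k] M))).compr₂ (swapHH k H M) =
      (LinearMap.mul k (H ⊗[k] (H ⊗[k] M))).compl₁₂ (swapHH k H M) (swapHH k H M) := by
    ext; simp [swapHH]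
  exact congr($key u v)

variable {M N : Type*} [AddCommGroup M] [Module k M] [AddCommGroup N] [Module k N]

lemma swapHH_lTensor_lTensor (f : M →ₗ[k] N) (u : H ⊗[k] (H ⊗[k] M)) :
    swapHH k H N ((f.lTensor H).lTensor H u) =
      (f.lTensor H).lTensor H (swapHH k H M u) := by
  have key : swapHH k H N ∘ₗ (f.lTensor H).lTensor H =
      (f.lTensor H).lTensor H ∘ₗ swapHH k H M := by
    ext; simp [swapHH]
  exact congr($key u)

lemma swapHH_braid (u : H ⊗[k] (H ⊗[k] (H ⊗[k] M))) :
    swapHH k H (H ⊗[k] M) ((swapHH k H M).lTensor H (swapHH k H (H ⊗[k] M) u)) =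
      (swapHH k H M).lTensor H (swapHH k H (H ⊗[k] M) ((swapHH k H M).lTensor H u)) := by
  have key :
      swapHH k H (H ⊗[k] M) ∘ₗ (swapHH k H M).lTensor H ∘ₗ swapHH k H (H ⊗[k] M) =
        (swapHH k H M).lTensor H ∘ₗ swapHH k H (H ⊗[k] M) ∘ₗ
          (swapHH k H M).lTensor H := by
    ext; simp [swapHH]
  exact congr($key u)

end SwapHH

lemma swapHH_comp_coact2 {k H A : Type*} [CommRing k] [CommRing H] [HopfAlgebra k H]
    [NonUnitalRing A] [Module k A] (δ : A →ₗ[k] H ⊗[k] A)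
    (hcoassoc : ∀ a : A,
      (LinearMap.rTensor A (Coalgebra.comul (R := k) (A := H))) (δ a)
        = (TensorProduct.assoc k H H A).symm ((LinearMap.lTensor H δ) (δ a)))
    (hcocomm : ∀ h : H,
      (TensorProduct.comm k H H) (Coalgebra.comul (R := k) h) = Coalgebra.comul h) :
    swapHH k H A ∘ₗ coact2 δ = coact2 δ := by
  have hcoact2 : coact2 δ = (TensorProduct.assoc k H H A).toLinearMap ∘ₗ
      (Coalgebra.comul (R := k) (A := H)).rTensor A ∘ₗ δ := by
    ext a
    simp [coact2, hcoassoc]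
  have hcomm : (TensorProduct.comm k H H).toLinearMap ∘ₗ Coalgebra.comul (R := k) (A := H) =
      Coalgebra.comul := LinearMap.ext hcocomm
  rw [hcoact2, swapHH]
  ext a
  simp only [LinearMap.comp_apply, LinearEquiv.coe_coe, LinearEquiv.symm_apply_apply]
  rw [← LinearMap.comp_apply (LinearMap.rTensor A _), ← LinearMap.rTensor_comp, hcomm]

theorem pseudoProd_associative_general (δ : A →ₗ[k] H ⊗[k] A)
    (hmul : ∀ a b : A, δ (a * b) = δ a * δ b)
    (hcoassoc : ∀ a : A,
      (LinearMap.rTensor A (Coalgebra.comul (R := k) (A := H))) (δ a)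
        = (TensorProduct.assoc k H H A).symm ((LinearMap.lTensor H δ) (δ a)))
    (hcocomm : ∀ h : H,
      (TensorProduct.comm k H H) (Coalgebra.comul (R := k) h) = Coalgebra.comul h) :
    ∀ x y z : H ⊗[k] A,
      expProdL δ (pseudoProd δ x y) z = expProdR δ x (pseudoProd δ y z) := by
  intro x y z
  have hcoact2 (u : H ⊗[k] A) :
      (δ.lTensor H).lTensor H (δ.lTensor H u) = (coact2 δ).lTensor H u :=
    (LinearMap.lTensor_comp_apply _ _ _ u).symm
  have hcoact2_swap (u : H ⊗[k] A) : (swapHH k H A).lTensor H ((coact2 δ).lTensor H u) =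
      (coact2 δ).lTensor H u := by
    rw [← LinearMap.lTensor_comp_apply, swapHH_comp_coact2 δ hcoassoc hcocomm]
  have hδ_mul := LinearMap.lTensor_map_mul (M := H ⊗[k] A) (N := H ⊗[k] (H ⊗[k] A)) (H := H)
    (δ.lTensor H) (δ.lTensor_map_mul hmul)
  have hswap_mul := LinearMap.lTensor_map_mul (M := H ⊗[k] (H ⊗[k] A))
    (N := H ⊗[k] (H ⊗[k] A)) (H := H) (swapHH k H A) swapHH_mul
  simp only [expProdL, expProdR, pseudoProd, LinearMap.comp_apply]
  rw [hδ_mul, hcoact2, ← swapHH_lTensor_lTensor, hcoact2,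
    hδ_mul, hcoact2, ← swapHH_lTensor_lTensor, hcoact2]
  rw [hswap_mul, swapHH_mul, hcoact2_swap, swapHH_braid, hcoact2_swap]
  exact Algebra.TensorProduct.mul_assoc (R := k) (A := H) (B := H ⊗[k] (H ⊗[k] A)) _ _ _

/-- for a commutative cocommutative Hopf algebra `H` and an
associative `H`-comodule algebra `A`, the pseudoalgebra `P(A) = H ⊗ A` is
associative: `(x ∗ y) ∗ z = x ∗ (y ∗ z)` in `H^{⊗3} ⊗_H P(A)`. -/
theorem pseudoProd_associative (δ : A →ₗ[k] H ⊗[k] A)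
    (hmul : ∀ a b : A, δ (a * b) = δ a * δ b)
    (hcoassoc : ∀ a : A,
      (LinearMap.rTensor A (Coalgebra.comul (R := k) (A := H))) (δ a)
        = (TensorProduct.assoc k H H A).symm ((LinearMap.lTensor H δ) (δ a)))
    (hcounit : ∀ a : A,
      (TensorProduct.lid k A)
        ((LinearMap.rTensor A (Coalgebra.counit (R := k) (A := H))) (δ a)) = a)
    (hcocomm : ∀ h : H,
      (TensorProduct.comm k H H) (Coalgebra.comul (R := k) h) = Coalgebra.comul h) :
    ∀ x y z : H ⊗[k] A,
      expProdL δ (pseudoProd δ x y) z = expProdR δ x (pseudoProd δ y z) :=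
  pseudoProd_associative_general δ hmul hcoassoc hcocomm
end

section
/- Let C be a conformal algebra over a field k of characteristic 0 and define the pseudoproduct a ∗ b = ∑_{s≥0} ((−D)^s/s!) ⊗ 1 ⊗_{k[D]} (a ∘ₛ b) ∈ (k[D] ⊗ k[D]) ⊗_{k[D]} C. Then the sesquilinearity axioms (Da) ∘ₙ b = −n a ∘_{n−1} b and a ∘ₙ (Db) = D(a ∘ₙ b) + n a ∘_{n−1} b are equivalent to the H-bilinearity of ∗: (f(D)a) ∗ (g(D)b) = (f(D) ⊗ g(D) ⊗_{k[D]} 1)(a ∗ b) for all polynomials f, g ∈ k[D]. -/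
/-!
Write `L` for multiplication by `X = D` on the left factor of `k[X] ⊗ C` and `R` for the action
of `D` on the right factor. The right-hand side of the bilinearity identity is
`L ^ p (R - L) ^ q` applied to `a ∗ b`, so bilinearity says
`(D ^ p a) ∗ (D ^ q b) = L ^ p (R - L) ^ q (a ∗ b)`. Its cases `(p, q) = (1, 0)` and `(0, 1)`,
read off coefficientwise in `X`, are exactly the left and right sesquilinearity axioms
(the factor `n` in the axioms is what turns `(-X) ^ n / n!` into `X · (-X) ^ (n - 1) / (n - 1)!`),
and these two cases iterate to all `p, q`. Locality makes every truncation `N` beyond the last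
nonzero `n`-product give the same sum, so the identity can be proved for large `N` and
transported to the given one.
-/

open Polynomial TensorProduct Filter

namespace ConformalAlgebra

theorem neg_one_pow_mul_inv_factorial_ne_zero {k : Type*} [Field k] [CharZero k] (n : ℕ) :
    (-1 : k) ^ n * (n.factorial : k)⁻¹ ≠ 0 :=
  mul_ne_zero (pow_ne_zero _ (neg_ne_zero.2 one_ne_zero))
    (inv_ne_zero (Nat.cast_ne_zero.2 n.factorial_ne_zero))

theorem neg_one_pow_succ_mul_inv_factorial_succ {k : Type*} [Field k] [CharZero k] (n : ℕ) :
    (-1 : k) ^ (n + 1) * ((n + 1).factorial : k)⁻¹ * ((n : k) + 1)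
      = -((-1) ^ n * (n.factorial : k)⁻¹) := by
  have : (n : k) + 1 ≠ 0 := Nat.cast_add_one_ne_zero n
  rw [Nat.factorial_succ]
  push_cast
  field_simp
  ring

section Operators

variable (k C : Type*) [CommSemiring k] [AddCommMonoid C] [Module k C]

noncomputable def mulXLeft : Module.End k (k[X] ⊗[k] C) :=
  LinearMap.rTensor C (LinearMap.mulLeft k X)

noncomputable def coeffTensor (n : ℕ) : k[X] ⊗[k] C →ₗ[k] C :=
  TensorProduct.lid k C ∘ₗ LinearMap.rTensor C (lcoeff k n)

variable [Module k[X] C] [IsScalarTower k k[X] C]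

noncomputable def smulXRight : Module.End k (k[X] ⊗[k] C) :=
  LinearMap.lTensor k[X] (DistribMulAction.toModuleEnd k C (X : k[X]))

end Operators

/-- Under `(k[D] ⊗ k[D]) ⊗_{k[D]} C ≃ k[D] ⊗ C`, `(f ⊗ g) ⊗ c ↦ f·S(g₍₁₎) ⊗ g₍₂₎c` with `D = X`,
`D ⊗ 1` acts as `mulXLeft` and `1 ⊗ D` as `smulXRight - mulXLeft`; this is the action of
`D ^ p ⊗ D ^ q`. -/
noncomputable def monomialAction (k C : Type*) [CommRing k] [AddCommGroup C] [Module k C]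
    [Module k[X] C] [IsScalarTower k k[X] C] (p q : ℕ) : Module.End k (k[X] ⊗[k] C) :=
  mulXLeft k C ^ p * (smulXRight k C - mulXLeft k C) ^ q

section OperatorLemmas

variable {k C : Type*} [CommSemiring k] [AddCommMonoid C] [Module k C]

theorem mulXLeft_tmul (f : k[X]) (c : C) : mulXLeft k C (f ⊗ₜ c) = (X * f) ⊗ₜ c := rfl

theorem mulXLeft_pow_tmul (m : ℕ) (f : k[X]) (c : C) :
    (mulXLeft k C ^ m) (f ⊗ₜ c) = (X ^ m * f) ⊗ₜ c := by
  rw [mulXLeft, LinearMap.rTensor_pow, LinearMap.pow_mulLeft, LinearMap.rTensor_tmul]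
  rfl

theorem coeffTensor_tmul (n : ℕ) (f : k[X]) (c : C) :
    coeffTensor k C n (f ⊗ₜ c) = f.coeff n • c := by
  simp [coeffTensor]

theorem coeffTensor_zero_mulXLeft (x : k[X] ⊗[k] C) : coeffTensor k C 0 (mulXLeft k C x) = 0 := by
  induction x using TensorProduct.induction_on with
  | zero => simp
  | tmul f c => simp [mulXLeft_tmul, coeffTensor_tmul]
  | add x y hx hy => simp [hx, hy]

theorem coeffTensor_succ_mulXLeft (n : ℕ) (x : k[X] ⊗[k] C) :
    coeffTensor k C (n + 1) (mulXLeft k C x) = coeffTensor k C n x := by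
  induction x using TensorProduct.induction_on with
  | zero => simp
  | tmul f c => simp [mulXLeft_tmul, coeffTensor_tmul]
  | add x y hx hy => simp [hx, hy]

variable [Module k[X] C] [IsScalarTower k k[X] C]

theorem smulXRight_tmul (f : k[X]) (c : C) :
    smulXRight k C (f ⊗ₜ c) = f ⊗ₜ ((X : k[X]) • c) := rfl

theorem coeffTensor_smulXRight (n : ℕ) (x : k[X] ⊗[k] C) :
    coeffTensor k C n (smulXRight k C x) = (X : k[X]) • coeffTensor k C n x := by
  induction x using TensorProduct.induction_on with
  | zero => simp
  | tmul f c => rw [smulXRight_tmul, coeffTensor_tmul, coeffTensor_tmul, smul_comm]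
  | add x y hx hy => simp [hx, hy]

theorem commute_mulXLeft_smulXRight : Commute (mulXLeft k C) (smulXRight k C) :=
  (LinearMap.rTensor_comp_lTensor _ _ _).trans (LinearMap.lTensor_comp_rTensor _ _ _).symm

theorem smulXRight_pow_tmul (n : ℕ) (f : k[X]) (c : C) :
    (smulXRight k C ^ n) (f ⊗ₜ c) = f ⊗ₜ ((X ^ n : k[X]) • c) := by
  rw [smulXRight, LinearMap.lTensor_pow, ← map_pow, LinearMap.lTensor_tmul]
  rfl

end OperatorLemmas

section Pseudoproduct

variable {k C : Type*} [Field k] [AddCommGroup C] [Module k C] (prod : ℕ → C →ₗ[k] C →ₗ[k] C)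

noncomputable def pseudoproduct (N : ℕ) (a b : C) : k[X] ⊗[k] C :=
  ∑ s ∈ Finset.range N, ((-1 : k) ^ s * (s.factorial : k)⁻¹) • ((X ^ s : k[X]) ⊗ₜ[k] prod s a b)

theorem pseudoproduct_succ_of_eq_zero {N : ℕ} {a b : C} (h : prod N a b = 0) :
    pseudoproduct prod (N + 1) a b = pseudoproduct prod N a b := by
  rw [pseudoproduct, Finset.sum_range_succ, h, tmul_zero, smul_zero, add_zero, pseudoproduct]

theorem pseudoproduct_eq_of_le {N M : ℕ} {a b : C} (hNM : N ≤ M)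
    (h : ∀ s, N ≤ s → prod s a b = 0) : pseudoproduct prod M a b = pseudoproduct prod N a b := by
  induction hNM with
  | refl => rfl
  | step hle ih => rw [pseudoproduct_succ_of_eq_zero prod (h _ hle), ih]

theorem coeffTensor_pseudoproduct {n N : ℕ} (hn : n < N) (a b : C) :
    coeffTensor k C n (pseudoproduct prod N a b)
      = ((-1 : k) ^ n * (n.factorial : k)⁻¹) • prod n a b := by
  simp only [pseudoproduct, map_sum, map_smul, coeffTensor_tmul, coeff_X_pow, ite_smul, one_smul,
    zero_smul, smul_ite, smul_zero]
  rw [Finset.sum_ite_eq, if_pos (Finset.mem_range.mpr hn)]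

theorem eventually_pseudoproduct_eq_of_vanishing
    (hloc : ∀ a b : C, ∃ N : ℕ, ∀ s, N ≤ s → prod s a b = 0)
    {x y a b : C} {T : Module.End k (k[X] ⊗[k] C)}
    (h : ∀ N, (∀ s, N ≤ s → prod s x y = 0 ∧ prod s a b = 0) →
      pseudoproduct prod N x y = T (pseudoproduct prod N a b)) :
    ∀ᶠ N in atTop, pseudoproduct prod N x y = T (pseudoproduct prod N a b) := by
  obtain ⟨N₁, hN₁⟩ := hloc x y
  obtain ⟨N₂, hN₂⟩ := hloc a b
  filter_upwards [eventually_ge_atTop (max N₁ N₂)] with N hN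
  exact h N fun s hs => ⟨hN₁ s (by omega), hN₂ s (by omega)⟩

theorem pseudoproduct_eq_of_eventually {x y a b : C} {T : Module.End k (k[X] ⊗[k] C)} {N : ℕ}
    (h : ∀ᶠ M in atTop, pseudoproduct prod M x y = T (pseudoproduct prod M a b))
    (hvan : ∀ s, N ≤ s → prod s x y = 0 ∧ prod s a b = 0) :
    pseudoproduct prod N x y = T (pseudoproduct prod N a b) := by
  obtain ⟨M, hM, hNM⟩ := (h.and (eventually_ge_atTop N)).exists
  rwa [pseudoproduct_eq_of_le prod hNM fun s hs => (hvan s hs).1,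
    pseudoproduct_eq_of_le prod hNM fun s hs => (hvan s hs).2] at hM

section SmulLeft

variable [Module k[X] C] [CharZero k]

theorem pseudoproduct_succ_smul_left
    (h₀ : ∀ a b : C, prod 0 ((X : k[X]) • a) b = 0)
    (hsucc : ∀ (n : ℕ) (a b : C), prod (n + 1) ((X : k[X]) • a) b = -((n : k) + 1) • prod n a b)
    (N : ℕ) (a b : C) :
    pseudoproduct prod (N + 1) ((X : k[X]) • a) b = mulXLeft k C (pseudoproduct prod N a b) := by
  rw [pseudoproduct, Finset.sum_range_succ', h₀, tmul_zero, smul_zero, add_zero, pseudoproduct,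
    map_sum]
  refine Finset.sum_congr rfl fun t _ => ?_
  rw [hsucc, tmul_smul, smul_smul, map_smul, mulXLeft_tmul, ← pow_succ', mul_neg,
    neg_one_pow_succ_mul_inv_factorial_succ, neg_neg]

theorem eventually_pseudoproduct_smul_left
    (hloc : ∀ a b : C, ∃ N : ℕ, ∀ s, N ≤ s → prod s a b = 0)
    (h₀ : ∀ a b : C, prod 0 ((X : k[X]) • a) b = 0)
    (hsucc : ∀ (n : ℕ) (a b : C), prod (n + 1) ((X : k[X]) • a) b = -((n : k) + 1) • prod n a b)
    (a b : C) :
    ∀ᶠ N in atTop,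
      pseudoproduct prod N ((X : k[X]) • a) b = mulXLeft k C (pseudoproduct prod N a b) := by
  obtain ⟨N₀, hN₀⟩ := hloc ((X : k[X]) • a) b
  filter_upwards [eventually_ge_atTop N₀] with N hN
  rw [← pseudoproduct_succ_of_eq_zero prod (hN₀ N hN), pseudoproduct_succ_smul_left prod h₀ hsucc]

theorem eventually_pseudoproduct_pow_smul_left
    (hloc : ∀ a b : C, ∃ N : ℕ, ∀ s, N ≤ s → prod s a b = 0)
    (h₀ : ∀ a b : C, prod 0 ((X : k[X]) • a) b = 0)
    (hsucc : ∀ (n : ℕ) (a b : C), prod (n + 1) ((X : k[X]) • a) b = -((n : k) + 1) • prod n a b)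
    (p : ℕ) (a b : C) :
    ∀ᶠ N in atTop, pseudoproduct prod N ((X ^ p : k[X]) • a) b
      = (mulXLeft k C ^ p) (pseudoproduct prod N a b) := by
  induction p with
  | zero => simp
  | succ p ih =>
    filter_upwards
      [eventually_pseudoproduct_smul_left prod hloc h₀ hsucc ((X ^ p : k[X]) • a) b, ih]
      with N hstep hp
    rw [pow_succ', mul_smul, hstep, hp, pow_succ', Module.End.mul_apply]

theorem sesquilinear_left_of_eventually_pseudoproduct
    (h : ∀ a b : C, ∀ᶠ N in atTop,
      pseudoproduct prod N ((X : k[X]) • a) b = mulXLeft k C (pseudoproduct prod N a b)) :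
    (∀ a b : C, prod 0 ((X : k[X]) • a) b = 0) ∧
      ∀ (n : ℕ) (a b : C), prod (n + 1) ((X : k[X]) • a) b = -((n : k) + 1) • prod n a b := by
  refine ⟨fun a b => ?_, fun n a b => ?_⟩
  · obtain ⟨N, hN, heq⟩ := ((eventually_gt_atTop 1).and (h a b)).exists
    simpa [coeffTensor_pseudoproduct prod (by omega : 0 < N), coeffTensor_zero_mulXLeft] using
      congrArg (coeffTensor k C 0) heq
  · obtain ⟨N, hN, heq⟩ := ((eventually_gt_atTop (n + 1)).and (h a b)).exists
    have hcoeff := congrArg (coeffTensor k C (n + 1)) heq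
    rw [coeffTensor_pseudoproduct prod hN, coeffTensor_succ_mulXLeft,
      coeffTensor_pseudoproduct prod (by omega : n < N)] at hcoeff
    refine smul_right_injective C (neg_one_pow_mul_inv_factorial_ne_zero (k := k) (n + 1)) ?_
    dsimp only
    rw [hcoeff, smul_smul, mul_neg, neg_one_pow_succ_mul_inv_factorial_succ, neg_neg]

end SmulLeft

variable [Module k[X] C] [IsScalarTower k k[X] C]

theorem monomialAction_pseudoproduct (p q N : ℕ) (a b : C) :
    monomialAction k C p q (pseudoproduct prod N a b)
      = ∑ s ∈ Finset.range N, ∑ i ∈ Finset.range (q + 1),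
          ((-1 : k) ^ (s + i) * (q.choose i : k) * ((s.factorial : k))⁻¹) •
            ((X ^ (p + s + i) : k[X]) ⊗ₜ[k] ((X ^ (q - i) : k[X]) • prod s a b)) := by
  have hsub : smulXRight k C - mulXLeft k C = (-1 : k) • mulXLeft k C + smulXRight k C := by
    refine TensorProduct.ext' fun f c => ?_
    simp [sub_eq_neg_add]
  have hcomm : Commute ((-1 : k) • mulXLeft k C) (smulXRight k C) :=
    (commute_mulXLeft_smulXRight (k := k) (C := C)).smul_left _
  rw [monomialAction, hsub, hcomm.add_pow, Finset.mul_sum,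
    LinearMap.sum_apply, pseudoproduct, Finset.sum_comm]
  refine Finset.sum_congr rfl fun i _ => ?_
  rw [map_sum]
  refine Finset.sum_congr rfl fun s _ => ?_
  simp only [_root_.smul_pow, Module.End.mul_apply, Module.End.natCast_apply, LinearMap.smul_apply,
    map_smul, map_nsmul, smulXRight_pow_tmul, mulXLeft_pow_tmul]
  rw [← Nat.cast_smul_eq_nsmul k, smul_smul, smul_smul, ← pow_add, ← pow_add, add_comm i s,
    ← add_assoc]
  congr 1
  ring

variable [CharZero k]

theorem pseudoproduct_succ_smul_right
    (h₀ : ∀ a b : C, prod 0 a ((X : k[X]) • b) = (X : k[X]) • prod 0 a b)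
    (hsucc : ∀ (n : ℕ) (a b : C),
      prod (n + 1) a ((X : k[X]) • b) = (X : k[X]) • prod (n + 1) a b + ((n : k) + 1) • prod n a b)
    (N : ℕ) (a b : C) :
    pseudoproduct prod (N + 1) a ((X : k[X]) • b)
      = smulXRight k C (pseudoproduct prod (N + 1) a b)
        - mulXLeft k C (pseudoproduct prod N a b) := by
  have hterm : ∀ t : ℕ,
      ((-1 : k) ^ (t + 1) * ((t + 1).factorial : k)⁻¹) •
          ((X ^ (t + 1) : k[X]) ⊗ₜ[k] prod (t + 1) a ((X : k[X]) • b))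
        = smulXRight k C (((-1 : k) ^ (t + 1) * ((t + 1).factorial : k)⁻¹) •
            ((X ^ (t + 1) : k[X]) ⊗ₜ[k] prod (t + 1) a b))
          - mulXLeft k C
              (((-1 : k) ^ t * (t.factorial : k)⁻¹) • ((X ^ t : k[X]) ⊗ₜ[k] prod t a b)) := by
    intro t
    rw [hsucc, tmul_add, smul_add, map_smul, map_smul, smulXRight_tmul, mulXLeft_tmul, ← pow_succ',
      tmul_smul ((t : k) + 1), smul_smul, neg_one_pow_succ_mul_inv_factorial_succ, neg_smul,
      sub_eq_add_neg]
  simp only [pseudoproduct, Finset.sum_range_succ' _ N, hterm, Finset.sum_sub_distrib, map_add,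
    map_sum, h₀]
  abel

theorem eventually_pseudoproduct_smul_right
    (hloc : ∀ a b : C, ∃ N : ℕ, ∀ s, N ≤ s → prod s a b = 0)
    (h₀ : ∀ a b : C, prod 0 a ((X : k[X]) • b) = (X : k[X]) • prod 0 a b)
    (hsucc : ∀ (n : ℕ) (a b : C),
      prod (n + 1) a ((X : k[X]) • b) = (X : k[X]) • prod (n + 1) a b + ((n : k) + 1) • prod n a b)
    (a b : C) :
    ∀ᶠ N in atTop, pseudoproduct prod N a ((X : k[X]) • b)
      = (smulXRight k C - mulXLeft k C) (pseudoproduct prod N a b) := by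
  obtain ⟨N₁, hN₁⟩ := hloc a ((X : k[X]) • b)
  obtain ⟨N₂, hN₂⟩ := hloc a b
  filter_upwards [eventually_ge_atTop N₁, eventually_ge_atTop N₂] with N hN₁N hN₂N
  rw [← pseudoproduct_succ_of_eq_zero prod (hN₁ N hN₁N),
    pseudoproduct_succ_smul_right prod h₀ hsucc,
    pseudoproduct_succ_of_eq_zero prod (hN₂ N hN₂N), LinearMap.sub_apply]

theorem eventually_pseudoproduct_pow_smul_right
    (hloc : ∀ a b : C, ∃ N : ℕ, ∀ s, N ≤ s → prod s a b = 0)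
    (h₀ : ∀ a b : C, prod 0 a ((X : k[X]) • b) = (X : k[X]) • prod 0 a b)
    (hsucc : ∀ (n : ℕ) (a b : C),
      prod (n + 1) a ((X : k[X]) • b) = (X : k[X]) • prod (n + 1) a b + ((n : k) + 1) • prod n a b)
    (q : ℕ) (a b : C) :
    ∀ᶠ N in atTop, pseudoproduct prod N a ((X ^ q : k[X]) • b)
      = ((smulXRight k C - mulXLeft k C) ^ q) (pseudoproduct prod N a b) := by
  induction q with
  | zero => simp
  | succ q ih =>
    filter_upwards
      [eventually_pseudoproduct_smul_right prod hloc h₀ hsucc a ((X ^ q : k[X]) • b), ih]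
      with N hstep hq
    rw [pow_succ', mul_smul, hstep, hq, pow_succ', Module.End.mul_apply]

theorem eventually_pseudoproduct_pow_smul_pow_smul
    (hloc : ∀ a b : C, ∃ N : ℕ, ∀ s, N ≤ s → prod s a b = 0)
    (h₁ : ∀ a b : C, prod 0 ((X : k[X]) • a) b = 0)
    (h₂ : ∀ (n : ℕ) (a b : C), prod (n + 1) ((X : k[X]) • a) b = -((n : k) + 1) • prod n a b)
    (h₃ : ∀ a b : C, prod 0 a ((X : k[X]) • b) = (X : k[X]) • prod 0 a b)
    (h₄ : ∀ (n : ℕ) (a b : C),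
      prod (n + 1) a ((X : k[X]) • b) = (X : k[X]) • prod (n + 1) a b + ((n : k) + 1) • prod n a b)
    (p q : ℕ) (a b : C) :
    ∀ᶠ N in atTop, pseudoproduct prod N ((X ^ p : k[X]) • a) ((X ^ q : k[X]) • b)
      = monomialAction k C p q (pseudoproduct prod N a b) := by
  filter_upwards [eventually_pseudoproduct_pow_smul_left prod hloc h₁ h₂ p a ((X ^ q : k[X]) • b),
    eventually_pseudoproduct_pow_smul_right prod hloc h₃ h₄ q a b] with N hp hq
  rw [hp, hq, monomialAction, Module.End.mul_apply]

theorem sesquilinear_right_of_eventually_pseudoproduct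
    (h : ∀ a b : C, ∀ᶠ N in atTop, pseudoproduct prod N a ((X : k[X]) • b)
      = (smulXRight k C - mulXLeft k C) (pseudoproduct prod N a b)) :
    (∀ a b : C, prod 0 a ((X : k[X]) • b) = (X : k[X]) • prod 0 a b) ∧
      ∀ (n : ℕ) (a b : C), prod (n + 1) a ((X : k[X]) • b)
        = (X : k[X]) • prod (n + 1) a b + ((n : k) + 1) • prod n a b := by
  refine ⟨fun a b => ?_, fun n a b => ?_⟩
  · obtain ⟨N, hN, heq⟩ := ((eventually_gt_atTop 1).and (h a b)).exists
    simpa [coeffTensor_pseudoproduct prod (by omega : 0 < N), coeffTensor_zero_mulXLeft,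
      coeffTensor_smulXRight] using congrArg (coeffTensor k C 0) heq
  · obtain ⟨N, hN, heq⟩ := ((eventually_gt_atTop (n + 1)).and (h a b)).exists
    have hcoeff := congrArg (coeffTensor k C (n + 1)) heq
    rw [LinearMap.sub_apply, map_sub, coeffTensor_smulXRight, coeffTensor_succ_mulXLeft,
      coeffTensor_pseudoproduct prod hN, coeffTensor_pseudoproduct prod hN,
      coeffTensor_pseudoproduct prod (by omega : n < N)] at hcoeff
    refine smul_right_injective C (neg_one_pow_mul_inv_factorial_ne_zero (k := k) (n + 1)) ?_
    dsimp only
    rw [hcoeff, smul_add, smul_comm _ (X : k[X]), smul_smul,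
      neg_one_pow_succ_mul_inv_factorial_succ, neg_smul, sub_eq_add_neg]

end Pseudoproduct

end ConformalAlgebra

open ConformalAlgebra

/-- for a conformal algebra `C` (a `k[D]`-module with `n`-products
satisfying locality), the sesquilinearity axioms are equivalent to the
`H`-bilinearity of the pseudoproduct
`a ∗ b = ∑_s ((−D)^s/s!) ⊗ 1 ⊗_{k[D]} (a ∘ₛ b)`.  The pseudoproduct is written
under the canonical identification `(k[D] ⊗ k[D]) ⊗_{k[D]} C ≅ k[D] ⊗_k C`,
`(f ⊗ g) ⊗_{k[D]} c ↦ f·S(g₍₁₎) ⊗ g₍₂₎ c`, and it suffices to take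
`f = D^p`, `g = D^q`. -/
theorem sesquilinearity_iff_pseudoproduct_bilinear
    {k C : Type*} [Field k] [CharZero k] [AddCommGroup C] [Module k C]
    [Module (Polynomial k) C] [IsScalarTower k (Polynomial k) C]
    (prod : ℕ → C →ₗ[k] C →ₗ[k] C)
    (hloc : ∀ a b : C, ∃ N : ℕ, ∀ s, N ≤ s → prod s a b = 0) :
    ((∀ a b : C, prod 0 ((X : Polynomial k) • a) b = 0) ∧
     (∀ (n : ℕ) (a b : C),
        prod (n + 1) ((X : Polynomial k) • a) b = -(((n : ℕ) + 1 : k)) • prod n a b) ∧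
     (∀ a b : C,
        prod 0 a ((X : Polynomial k) • b) = (X : Polynomial k) • prod 0 a b) ∧
     (∀ (n : ℕ) (a b : C),
        prod (n + 1) a ((X : Polynomial k) • b)
          = (X : Polynomial k) • prod (n + 1) a b + (((n : ℕ) + 1 : k)) • prod n a b))
    ↔
    (∀ (a b : C) (p q N : ℕ),
      (∀ s, N ≤ s →
        prod s ((X ^ p : Polynomial k) • a) ((X ^ q : Polynomial k) • b) = 0 ∧
        prod s a b = 0) →
      ∑ s ∈ Finset.range N, ((-1 : k) ^ s * ((s.factorial : k))⁻¹) •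
          ((X ^ s : Polynomial k) ⊗ₜ[k]
            prod s ((X ^ p : Polynomial k) • a) ((X ^ q : Polynomial k) • b))
        = ∑ s ∈ Finset.range N, ∑ i ∈ Finset.range (q + 1),
            ((-1 : k) ^ (s + i) * (q.choose i : k) * ((s.factorial : k))⁻¹) •
              ((X ^ (p + s + i) : Polynomial k) ⊗ₜ[k]
                ((X ^ (q - i) : Polynomial k) • prod s a b))) := by
  simp only [← monomialAction_pseudoproduct]
  change _ ↔ ∀ (a b : C) (p q N : ℕ), _ → pseudoproduct prod N _ _ = _
  constructor
  · rintro ⟨h₁, h₂, h₃, h₄⟩ a b p q N hvan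
    exact pseudoproduct_eq_of_eventually prod
      (eventually_pseudoproduct_pow_smul_pow_smul prod hloc h₁ h₂ h₃ h₄ p q a b) hvan
  · intro hbil
    obtain ⟨h₁, h₂⟩ := sesquilinear_left_of_eventually_pseudoproduct prod fun a b => by
      simpa [monomialAction] using eventually_pseudoproduct_eq_of_vanishing prod hloc (hbil a b 1 0)
    obtain ⟨h₃, h₄⟩ := sesquilinear_right_of_eventually_pseudoproduct prod fun a b => by
      simpa [monomialAction] using eventually_pseudoproduct_eq_of_vanishing prod hloc (hbil a b 0 1)
    exact ⟨h₁, h₂, h₃, h₄⟩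
end

section
/- Let k be a field of characteristic 0, H = k[D], and X = k[[t]] with the pairing ⟨tᵐ, Dⁿ⟩ determined by ⟨t, Dⁿ⟩ = δ_{n,1} and multiplicativity via the coproduct (so ⟨tᵐ, Dⁿ⟩ = n!·δ_{m,n} up to normalization). Then for all h ∈ k[D], x ∈ k[t], and y ∈ k[t,t⁻¹]: ⟨x, h₍₁₎⟩·(y·h₍₂₎) = ⟨x·S(y₍₂₎), h⟩·y₍₁₎, where h₍₁₎⊗h₍₂₎ = Δ(h), the action of k[D] on k[t,t⁻¹] is tⁿ·D = −n t^{n−1}, S(t) = −t is the antipode of k[t], and Δ(tⁿ) = ∑_{s≥0} C(n,s) t^{n−s} ⊗ t^s is the extended coproduct on k[t,t⁻¹]. -/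
namespace Finset

theorem sum_range_succ_ite_eq {M : Type*} [AddCommMonoid M] (K m : ℕ) (f : ℕ → M) :
    ∑ i ∈ range (K + 1), (if m = i then f i else 0) = if m ≤ K then f m else 0 := by
  simp only [sum_ite_eq, mem_range, Nat.lt_succ_iff]

theorem sum_range_succ_ite_add_eq {M : Type*} [AddCommMonoid M] (K m : ℕ) (f : ℕ → M) :
    ∑ s ∈ range (K + 1), (if m + s = K then f s else 0) = if m ≤ K then f (K - m) else 0 := by
  have hcond : ∀ s, (m + s = K) ↔ (m ≤ K ∧ K - m = s) := fun s => by omega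
  simp only [hcond, ite_and, sum_ite_irrel, sum_const_zero, sum_ite_eq, mem_range,
    Nat.lt_succ_iff, Nat.sub_le, if_true]

end Finset

theorem choose_mul_factorial_mul_ratCast {k : Type*} [Field k] [CharZero k] {K m : ℕ}
    (hm : m ≤ K) (q : ℚ) :
    (K.choose m : k) * m.factorial * (((-1) ^ (K - m) * ((K - m).factorial : ℚ) * q : ℚ) : k)
      = (q : k) * (-1) ^ (K - m) * K.factorial := by
  rw [← Nat.choose_mul_factorial_mul_factorial hm]
  push_cast
  ring

/-- The identity `⟨x, h₍₁₎⟩ (y·h₍₂₎) = ⟨x·S(y₍₂₎), h⟩ y₍₁₎` on the basis `h = D^K`, `x = t^m`,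
`y = t^n`, with `⟨tᵐ, Dⁱ⟩ = m!·δ_{m,i}`, `tⁿ·D^j = (−1)^j j! C(n,j) t^{n−j}`,
`Δ(D^K) = ∑_i C(K,i) Dⁱ ⊗ D^{K−i}` and `S(tˢ) = (−1)ˢ tˢ`. -/
theorem pairing_swap_identity {k : Type*} [Field k] [CharZero k]
    (K m : ℕ) (n : ℤ) :
    ∑ i ∈ Finset.range (K + 1),
        ((K.choose i : k) * (if m = i then (m.factorial : k) else 0) *
          (((-1 : ℚ) ^ (K - i) * ((K - i).factorial : ℚ) * genChoose n (K - i) : ℚ) : k)) •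
          LaurentPolynomial.T (R := k) (n - (K - i : ℕ))
      = ∑ s ∈ Finset.range (K + 1),
          (((genChoose n s : ℚ) : k) * (-1 : k) ^ s *
            (if m + s = K then (K.factorial : k) else 0)) •
            LaurentPolynomial.T (R := k) (n - s) := by
  simp only [mul_ite, ite_mul, mul_zero, zero_mul, ite_smul, zero_smul]
  rw [Finset.sum_range_succ_ite_eq, Finset.sum_range_succ_ite_add_eq]
  split_ifs with hm
  · rw [choose_mul_factorial_mul_ratCast hm]
  · rfl
end
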